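/- arXiv:1205.3003 — 4 statements merged into one kernel-verified Lean document; each statement's English description precedes it below -/
import Mathlib

section
/- For any subset S = {i_1 < ... < i_k} ⊆ {1, ..., ℓ-2} and t ∈ ℂ, the vector h ∈ ℂ^ℓ defined by h_{i_j} = i_j + 2 Σ_{s=j+1}^{k} (-1)^{s-j} i_s + (-1)^{k-j+1}(t + ℓ - 1) for j = 1,...,k, h_i = 0 for i ∈ {1,...,ℓ-2} \ S, h_{ℓ-1} = 0, h_ℓ = t, satisfies the polynomial equations h_i · (c_i(h) + ℓ - i - 1) = 0 for all i = 1, ..., ℓ-1, where c_i(h) = h_i + 2h_{i+1} + ... + 2h_{ℓ-2} + h_{ℓ-1} + h_ℓ for i < ℓ-1 and c_{ℓ-1}(h) = h_ℓ. -/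
/-! Write `a_j = h_{i_j}` and `L = t + ℓ - 1`. The defining formula gives
`a_j + a_{j+1} = i_j - i_{j+1}` and `a_k = i_k - L`, so the tail sums `a_j + 2 Σ_{s>j} a_s`
telescope to `i_j - L`. As `h` vanishes on `{1, …, ℓ-1}` off `S`, this tail sum plus `h_ℓ = t`
is `c_{i_j}(h) = i_j - ℓ + 1`, which kills the second factor at `i_j`; at every other index the
first factor `h_m` vanishes. -/

open Finset

lemma Fin.Ioi_castSucc_eq_insert_succ {n : ℕ} (j : Fin n) :
    Ioi j.castSucc = insert j.succ (Ioi j.succ) := by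
  ext s
  simp only [mem_Ioi, mem_insert, Fin.lt_def, Fin.ext_iff, val_castSucc, val_succ]
  omega

section Alternating

open Fin

variable {R : Type*} [CommRing R] {n : ℕ} {a x : Fin (n + 1) → R} {L : R}

lemma add_succ_eq_of_alternating
    (ha : ∀ j, a j = x j + 2 * ∑ s > j, (-1 : R) ^ ((s : ℕ) - j) * x s
      + (-1 : R) ^ (n + 1 - j) * L) (j : Fin n) :
    a j.castSucc + a j.succ = x j.castSucc - x j.succ := by
  have hshift : ∀ s ∈ Ioi j.succ,
      (-1 : R) ^ ((s : ℕ) - j.castSucc) * x s = -((-1 : R) ^ ((s : ℕ) - j.succ) * x s) := by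
    intro s hs
    rw [mem_Ioi, Fin.lt_def, val_succ] at hs
    rw [val_castSucc, val_succ, show (s : ℕ) - j = (s - (j + 1)) + 1 by omega, pow_succ]
    ring
  have hsign : (-1 : R) ^ (n + 1 - j.castSucc) = -(-1 : R) ^ (n + 1 - j.succ) := by
    rw [val_castSucc, val_succ, show n + 1 - j = (n + 1 - (j + 1)) + 1 by omega, pow_succ]
    ring
  rw [ha j.castSucc, ha j.succ, Ioi_castSucc_eq_insert_succ, sum_insert notMem_Ioi_self,
    sum_congr rfl hshift, sum_neg_distrib, hsign, val_castSucc, val_succ, Nat.add_sub_cancel_left,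
    pow_one]
  ring

lemma add_two_mul_sum_Ioi_eq_of_alternating
    (ha : ∀ j, a j = x j + 2 * ∑ s > j, (-1 : R) ^ ((s : ℕ) - j) * x s
      + (-1 : R) ^ (n + 1 - j) * L) (j : Fin (n + 1)) :
    a j + 2 * ∑ s > j, a s = x j - L := by
  induction j using Fin.reverseInduction with
  | last => simp [ha, ← top_eq_last, sub_eq_add_neg]
  | cast j ih =>
    rw [Ioi_castSucc_eq_insert_succ, sum_insert notMem_Ioi_self]
    linear_combination ih + add_succ_eq_of_alternating ha j

end Alternating

lemma sum_Icc_eq_sum_Ioi_of_strictMono {M : Type*} [AddCommMonoid M] {k b : ℕ}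
    {i : Fin k → ℕ} (hi : StrictMono i) (hb : ∀ s, i s ≤ b) {f : ℕ → M} (j : Fin k)
    (hf : ∀ m ∈ Icc (i j + 1) b, (∀ s, i s ≠ m) → f m = 0) :
    ∑ m ∈ Icc (i j + 1) b, f m = ∑ s > j, f (i s) := by
  rw [← sum_image hi.injective.injOn]
  refine (sum_subset ?_ fun m hm hmi => hf m hm fun s hs => hmi ?_).symm
  · intro m hm
    obtain ⟨s, hs, rfl⟩ := mem_image.mp hm
    exact mem_Icc.mpr ⟨hi (mem_Ioi.mp hs), hb s⟩
  · rw [mem_Icc] at hm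
    exact mem_image.mpr ⟨s, mem_Ioi.mpr (hi.lt_iff_lt.mp (by omega)), hs⟩

theorem stmt1_explicit_solutions_satisfy_polynomial_equations_general
    (ℓ : ℕ) (k : ℕ) (i : Fin k → ℕ) (hmono : StrictMono i)
    (hbound : ∀ j, 1 ≤ i j ∧ i j ≤ ℓ - 2)
    (t : ℂ) (h : ℕ → ℂ)
    (hS : ∀ j : Fin k,
        h (i j) = (i j : ℂ)
          + 2 * (∑ s ∈ univ.filter (fun s => j < s),
              (-1 : ℂ) ^ ((s : ℕ) - (j : ℕ)) * (i s : ℂ))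
          + (-1 : ℂ) ^ (k - (j : ℕ)) * (t + (ℓ : ℂ) - 1))
    (hzero : ∀ m, 1 ≤ m → m ≤ ℓ - 2 → (∀ j : Fin k, i j ≠ m) → h m = 0)
    (hlast : h (ℓ - 1) = 0) (hℓval : h ℓ = t) :
    ∀ m, 1 ≤ m → m ≤ ℓ - 1 →
      h m * ((if m ≤ ℓ - 2 then
                h m + 2 * (∑ x ∈ Icc (m + 1) (ℓ - 2), h x) + h (ℓ - 1) + h ℓ
              else h ℓ)
             + (ℓ : ℂ) - (m : ℂ) - 1) = 0 := by
  intro m hm1 hm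
  by_cases hm2 : m ≤ ℓ - 2
  · rw [if_pos hm2, hlast, hℓval]
    by_cases hmS : ∃ j, i j = m
    · obtain ⟨j, rfl⟩ := hmS
      obtain ⟨n, rfl⟩ : ∃ n, k = n + 1 := Nat.exists_eq_add_one_of_ne_zero j.pos.ne'
      have htail := sum_Icc_eq_sum_Ioi_of_strictMono hmono (fun s => (hbound s).2) j
        fun m hm hmS => hzero m (by rw [mem_Icc] at hm; omega) (mem_Icc.mp hm).2 hmS
      have hkey := add_two_mul_sum_Ioi_eq_of_alternating (a := fun s => h (i s))
        (x := fun s => (i s : ℂ)) (by simpa only [filter_lt_eq_Ioi] using hS) j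
      rw [htail]
      linear_combination h (i j) * hkey
    · rw [hzero m hm1 hm2 (by simpa using hmS), zero_mul]
  · rw [if_neg hm2, show m = ℓ - 1 by omega, hlast, zero_mul]

/-- For a subset `S = {i_1 < ... < i_k} ⊆ {1, ..., ℓ-2}` and `t ∈ ℂ`, the vector
`h ∈ ℂ^ℓ` (written as a function on the indices `1, ..., ℓ`) defined by
`h_{i_j} = i_j + 2 Σ_{s=j+1}^{k} (-1)^{s-j} i_s + (-1)^{k-j+1}(t + ℓ - 1)`, `h_i = 0` for
`i ∈ {1,...,ℓ-2} \ S`, `h_{ℓ-1} = 0`, `h_ℓ = t`, satisfies the equations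
`h_i · (c_i(h) + ℓ - i - 1) = 0` for `i = 1, ..., ℓ-1`, where
`c_i(h) = h_i + 2 Σ_{m=i+1}^{ℓ-2} h_m + h_{ℓ-1} + h_ℓ` for `i ≤ ℓ-2` and `c_{ℓ-1}(h) = h_ℓ`. -/
theorem stmt1_explicit_solutions_satisfy_polynomial_equations
    (ℓ : ℕ) (hℓ : 3 ≤ ℓ) (k : ℕ) (i : Fin k → ℕ) (hmono : StrictMono i)
    (hbound : ∀ j, 1 ≤ i j ∧ i j ≤ ℓ - 2)
    (t : ℂ) (h : ℕ → ℂ)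
    (hS : ∀ j : Fin k,
        h (i j) = (i j : ℂ)
          + 2 * (∑ s ∈ univ.filter (fun s => j < s),
              (-1 : ℂ) ^ ((s : ℕ) - (j : ℕ)) * (i s : ℂ))
          + (-1 : ℂ) ^ (k - (j : ℕ)) * (t + (ℓ : ℂ) - 1))
    (hzero : ∀ m, 1 ≤ m → m ≤ ℓ - 2 → (∀ j : Fin k, i j ≠ m) → h m = 0)
    (hlast : h (ℓ - 1) = 0) (hℓval : h ℓ = t) :
    ∀ m, 1 ≤ m → m ≤ ℓ - 1 →
      h m * ((if m ≤ ℓ - 2 then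
                h m + 2 * (∑ x ∈ Icc (m + 1) (ℓ - 2), h x) + h (ℓ - 1) + h ℓ
              else h ℓ)
             + (ℓ : ℂ) - (m : ℂ) - 1) = 0 :=
  stmt1_explicit_solutions_satisfy_polynomial_equations_general ℓ k i hmono hbound t h hS hzero
    hlast hℓval
end

section
/- Every solution h ∈ ℂ^ℓ of the system of polynomial equations h_i · (c_i(h) + ℓ - i - 1) = 0, i = 1, ..., ℓ-1, where c_i(h) = h_i + 2h_{i+1} + ... + 2h_{ℓ-2} + h_{ℓ-1} + h_ℓ for i ≤ ℓ-2 and c_{ℓ-1}(h) = h_ℓ (so that the (ℓ-1)-st equation reads h_{ℓ-1} h_ℓ = 0), satisfies h_{ℓ-1} = 0 or h_ℓ = 0, and is of the following form: there exist a subset S = {i_1 < ... < i_k} ⊆ {1, ..., ℓ-2} and t ∈ ℂ such that h_i = 0 for i ∈ {1,...,ℓ-2} \ S, h_{i_j} = i_j + 2 Σ_{s=j+1}^{k} (-1)^{s-j} i_s + (-1)^{k-j+1}(t + ℓ - 1) for j = 1, ..., k, and either (h_{ℓ-1}, h_ℓ) = (0, t) or (h_{ℓ-1}, h_ℓ) =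 (t, 0). -/
open Finset

/-- Every solution `h ∈ ℂ^ℓ` (written as a function on indices `1, ..., ℓ`) of the
system `h_i · (c_i(h) + ℓ - i - 1) = 0` for `i = 1, ..., ℓ-2` together with `h_{ℓ-1} · h_ℓ = 0`
(where `c_i(h) = h_i + 2h_{i+1} + ... + 2h_{ℓ-2} + h_{ℓ-1} + h_ℓ`) satisfies `h_{ℓ-1} = 0` or
`h_ℓ = 0`, and has the form: there is a subset `S = {i_1 < ... < i_k} ⊆ {1, ..., ℓ-2}` and `t ∈ ℂ`
with `h_i = 0` for `i ∈ {1,...,ℓ-2} \ S`,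
`h_{i_j} = i_j + 2 Σ_{s=j+1}^{k} (-1)^{s-j} i_s + (-1)^{k-j+1}(t + ℓ - 1)`, and either
`(h_{ℓ-1}, h_ℓ) = (0, t)` or `(h_{ℓ-1}, h_ℓ) = (t, 0)`. -/
theorem stmt2_solutions_have_explicit_form
    (ℓ : ℕ) (hℓ : 3 ≤ ℓ) (h : ℕ → ℂ)
    (heqs : ∀ m, 1 ≤ m → m ≤ ℓ - 2 →
      h m * (h m + 2 * (∑ x ∈ Icc (m + 1) (ℓ - 2), h x) + h (ℓ - 1) + h ℓ
              + (ℓ : ℂ) - (m : ℂ) - 1) = 0)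
    (hlast : h (ℓ - 1) * h ℓ = 0) :
    (h (ℓ - 1) = 0 ∨ h ℓ = 0) ∧
    ∃ (k : ℕ) (i : Fin k → ℕ) (t : ℂ),
      StrictMono i ∧
      (∀ j, 1 ≤ i j ∧ i j ≤ ℓ - 2) ∧
      (∀ m, 1 ≤ m → m ≤ ℓ - 2 → (∀ j : Fin k, i j ≠ m) → h m = 0) ∧
      (∀ j : Fin k,
        h (i j) = (i j : ℂ)
          + 2 * (∑ s ∈ univ.filter (fun s => j < s),
              (-1 : ℂ) ^ ((s : ℕ) - (j : ℕ)) * (i s : ℂ))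
          + (-1 : ℂ) ^ (k - (j : ℕ)) * (t + (ℓ : ℂ) - 1)) ∧
      ((h (ℓ - 1) = 0 ∧ h ℓ = t) ∨ (h (ℓ - 1) = t ∧ h ℓ = 0)) := by
  have hdich : h (ℓ - 1) = 0 ∨ h ℓ = 0 := mul_eq_zero.mp hlast
  refine ⟨hdich, ?_⟩
  classical
  set n := ℓ - 2 with hn
  set S : Finset ℕ := (Icc 1 n).filter (fun x => h x ≠ 0) with hSdef
  set t : ℂ := h (ℓ - 1) + h ℓ with htdef
  set i : Fin S.card → ℕ := fun j => S.orderEmbOfFin rfl j with hidef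
  have hmemS : ∀ j, i j ∈ S := fun j => S.orderEmbOfFin_mem rfl j
  have hbound : ∀ j, 1 ≤ i j ∧ i j ≤ n ∧ h (i j) ≠ 0 := by
    intro j
    have := hmemS j
    rw [hSdef, mem_filter, mem_Icc] at this
    exact ⟨this.1.1, this.1.2, this.2⟩
  have hmono : StrictMono i := (S.orderEmbOfFin rfl).strictMono
  have hsurj : ∀ x ∈ S, ∃ j, i j = x := by
    intro x hx
    have hr := S.range_orderEmbOfFin rfl
    have : x ∈ Set.range (S.orderEmbOfFin rfl) := by rw [hr]; exact hx
    exact this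
  -- sum conversion
  have hconv : ∀ m : ℕ, (∑ x ∈ Icc (m + 1) n, h x)
      = ∑ s ∈ univ.filter (fun s => m < i s), h (i s) := by
    intro m
    have e1 : (∑ x ∈ (Icc (m + 1) n).filter (fun x => h x ≠ 0), h x)
        = ∑ x ∈ Icc (m + 1) n, h x :=
      Finset.sum_filter_of_ne (by intro x _ hx; exact hx)
    have e2 : (Icc (m + 1) n).filter (fun x => h x ≠ 0)
        = S.filter (fun x => m < x) := by
      ext x
      rw [hSdef, mem_filter, mem_filter, mem_filter, mem_Icc, mem_Icc]
      constructor
      · rintro ⟨⟨h1, h2⟩, h3⟩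
        exact ⟨⟨⟨by omega, h2⟩, h3⟩, by omega⟩
      · rintro ⟨⟨⟨h1, h2⟩, h3⟩, h4⟩
        exact ⟨⟨by omega, h2⟩, h3⟩
    have e3 : S.filter (fun x => m < x)
        = (univ.filter (fun s => m < i s)).image i := by
      ext x
      simp only [mem_filter, mem_image, mem_univ, true_and]
      constructor
      · rintro ⟨hx, hmx⟩
        obtain ⟨j, rfl⟩ := hsurj x hx
        exact ⟨j, hmx, rfl⟩
      · rintro ⟨j, hj, rfl⟩
        exact ⟨hmemS j, hj⟩
    rw [← e1, e2, e3, Finset.sum_image (fun a _ b _ hab => hmono.injective hab)]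
  -- the key equation
  have hE : ∀ j, h (i j)
      = -(2 * (∑ s ∈ univ.filter (fun s => j < s), h (i s)) + t + (ℓ : ℂ)
          - (i j : ℂ) - 1) := by
    intro j
    obtain ⟨h1, h2, h3⟩ := hbound j
    have heq := heqs (i j) h1 h2
    rcases mul_eq_zero.mp heq with hc | hc
    · exact absurd hc h3
    · have hsum : (∑ x ∈ Icc (i j + 1) (ℓ - 2), h x)
          = ∑ s ∈ univ.filter (fun s => j < s), h (i s) := by
        rw [show ℓ - 2 = n from rfl, hconv (i j)]
        apply Finset.sum_congr _ (fun _ _ => rfl)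
        apply Finset.filter_congr
        intro s _
        simp only [hmono.lt_iff_lt]
      rw [hsum] at hc
      linear_combination hc
  -- main formula, by downward induction
  have key : ∀ d : ℕ, ∀ j : Fin S.card, (j : ℕ) + d + 1 = S.card →
      h (i j) = (i j : ℂ)
        + 2 * (∑ s ∈ univ.filter (fun s => j < s),
            (-1 : ℂ) ^ ((s : ℕ) - (j : ℕ)) * (i s : ℂ))
        + (-1 : ℂ) ^ (S.card - (j : ℕ)) * (t + (ℓ : ℂ) - 1) := by
    intro d
    induction d with
    | zero =>
        intro j hj
        have hfe : univ.filter (fun s : Fin S.card => j < s) = ∅ := by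
          ext s
          simp only [mem_filter, mem_univ, true_and, notMem_empty, iff_false]
          have := s.isLt
          rw [Fin.lt_def]
          omega
        have hkj : S.card - (j : ℕ) = 1 := by omega
        rw [hE j, hfe, hkj]
        simp only [Finset.sum_empty]
        ring
    | succ d ih =>
        intro j hj
        have hjlt : (j : ℕ) + 1 < S.card := by omega
        set j' : Fin S.card := ⟨(j : ℕ) + 1, hjlt⟩ with hj'def
        have hIH := ih j' (by simp [hj'def]; omega)
        have hA : univ.filter (fun s : Fin S.card => j < s)
            = insert j' (univ.filter (fun s => j' < s)) := by
          ext s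
          simp only [mem_filter, mem_univ, true_and, mem_insert]
          rw [Fin.lt_def, Fin.lt_def, Fin.ext_iff]
          simp only [hj'def]
          omega
        have hnm : j' ∉ univ.filter (fun s : Fin S.card => j' < s) := by
          simp
        have hrec : h (i j) = (i j : ℂ) - (i j' : ℂ) - h (i j') := by
          have e1 := hE j
          rw [hA, Finset.sum_insert hnm] at e1
          have e2 := hE j'
          linear_combination e1 - e2
        have hsum2 : (∑ s ∈ univ.filter (fun s : Fin S.card => j < s),
              (-1 : ℂ) ^ ((s : ℕ) - (j : ℕ)) * (i s : ℂ))
            = -(i j' : ℂ) - (∑ s ∈ univ.filter (fun s => j' < s),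
              (-1 : ℂ) ^ ((s : ℕ) - (j' : ℕ)) * (i s : ℂ)) := by
          rw [hA, Finset.sum_insert hnm]
          have ht1 : ((j' : ℕ) - (j : ℕ)) = 1 := by simp [hj'def]
          rw [ht1]
          have ht2 : (∑ s ∈ univ.filter (fun s : Fin S.card => j' < s),
                (-1 : ℂ) ^ ((s : ℕ) - (j : ℕ)) * (i s : ℂ))
              = ∑ s ∈ univ.filter (fun s => j' < s),
                -((-1 : ℂ) ^ ((s : ℕ) - (j' : ℕ)) * (i s : ℂ)) := by
            apply Finset.sum_congr rfl
            intro s hs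
            simp only [mem_filter, mem_univ, true_and, Fin.lt_def] at hs
            have hd : (s : ℕ) - (j : ℕ) = ((s : ℕ) - (j' : ℕ)) + 1 := by
              simp only [hj'def] at hs ⊢
              omega
            rw [hd, pow_succ]
            ring
          rw [ht2, Finset.sum_neg_distrib]
          ring
        have hsgn : S.card - (j : ℕ) = (S.card - (j' : ℕ)) + 1 := by
          simp only [hj'def]
          omega
        rw [hrec, hIH, hsum2, hsgn, pow_succ]
        ring
  refine ⟨S.card, i, t, hmono, fun j => ⟨(hbound j).1, (hbound j).2.1⟩, ?_, ?_, ?_⟩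
  · intro m h1 h2 hnot
    by_contra hm
    have hmS : m ∈ S := by
      rw [hSdef, mem_filter, mem_Icc]
      exact ⟨⟨h1, h2⟩, hm⟩
    obtain ⟨j, hj⟩ := hsurj m hmS
    exact hnot j hj
  · intro j
    exact key (S.card - (j : ℕ) - 1) j (by have := j.isLt; omega)
  · rcases hdich with h0 | h0
    · left
      exact ⟨h0, by rw [htdef, h0, zero_add]⟩
    · right
      exact ⟨by rw [htdef, h0, add_zero], h0⟩
end

section
/- The system of nine polynomial equations over ℂ in variables (h_1, h_2, h_3, h_4): h_1(h_1+2h_2+h_3+h_4+2)=0, h_2(h_2+h_3+h_4+1)=0, h_3 h_4=0, h_3(h_1+2h_2+h_3+h_4+2)=0, h_2(h_1+h_2+h_4+1)=0, h_4 h_1=0, h_4(h_1+2h_2+h_3+h_4+2)=0, h_2(h_1+h_2+h_3+1)=0, h_1 h_3=0, has exactly five solutions: (0,0,0,0), (−2,0,0,0), (0,0,−2,0), (0,0,0,−2), and (0,−1,0,0). -/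
/-- The system of nine polynomial equations over `ℂ` arising in the classification of
irreducible weak modules from category 𝒪 for `L_{D_4}(-2,0)` has exactly five solutions:
`(0,0,0,0)`, `(-2,0,0,0)`, `(0,0,-2,0)`, `(0,0,0,-2)`, `(0,-1,0,0)`. -/
theorem stmt4_nine_equations_five_solutions (h1 h2 h3 h4 : ℂ) :
    (h1 * (h1 + 2 * h2 + h3 + h4 + 2) = 0 ∧
     h2 * (h2 + h3 + h4 + 1) = 0 ∧
     h3 * h4 = 0 ∧
     h3 * (h1 + 2 * h2 + h3 + h4 + 2) = 0 ∧
     h2 * (h1 + h2 + h4 + 1) = 0 ∧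
     h4 * h1 = 0 ∧
     h4 * (h1 + 2 * h2 + h3 + h4 + 2) = 0 ∧
     h2 * (h1 + h2 + h3 + 1) = 0 ∧
     h1 * h3 = 0)
    ↔
    ((h1, h2, h3, h4) = (0, 0, 0, 0) ∨
     (h1, h2, h3, h4) = (-2, 0, 0, 0) ∨
     (h1, h2, h3, h4) = (0, 0, -2, 0) ∨
     (h1, h2, h3, h4) = (0, 0, 0, -2) ∨
     (h1, h2, h3, h4) = (0, -1, 0, 0)) := by
  constructor
  · rintro ⟨e1, e2, e3, e4, e5, e6, e7, e8, e9⟩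
    by_cases H2 : h2 = 0
    · subst H2
      by_cases H1 : h1 = 0
      · subst H1
        by_cases H3 : h3 = 0
        · subst H3
          by_cases H4 : h4 = 0
          · left; simp [H4]
          · have s := (mul_eq_zero.mp e7).resolve_left H4
            right; right; right; left
            simp only [Prod.mk.injEq]
            refine ⟨trivial, trivial, trivial, ?_⟩
            linear_combination s
        · have H4 : h4 = 0 := (mul_eq_zero.mp e3).resolve_left H3
          have s := (mul_eq_zero.mp e4).resolve_left H3
          right; right; left
          simp only [Prod.mk.injEq]
          refine ⟨trivial, trivial, ?_, H4⟩
          rw [H4] at s; linear_combination s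
      · have H3 : h3 = 0 := (mul_eq_zero.mp e9).resolve_left H1
        have H4 : h4 = 0 := (mul_eq_zero.mp e6).resolve_right H1
        have s := (mul_eq_zero.mp e1).resolve_left H1
        right; left
        simp only [Prod.mk.injEq]
        refine ⟨?_, trivial, H3, H4⟩
        rw [H3, H4] at s; linear_combination s
    · have a := (mul_eq_zero.mp e2).resolve_left H2
      have b := (mul_eq_zero.mp e5).resolve_left H2
      have c := (mul_eq_zero.mp e8).resolve_left H2
      have h13 : h1 = h3 := by linear_combination b - a
      have h34 : h3 = h4 := by linear_combination c - b
      have t0 : h1 = 0 := by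
        have : h1 * h1 = 0 := by rw [← h13] at e9; exact e9
        exact mul_self_eq_zero.mp this
      have t3 : h3 = 0 := by rw [← h13]; exact t0
      have t4 : h4 = 0 := by rw [← h34]; exact t3
      right; right; right; right
      simp only [Prod.mk.injEq]
      refine ⟨t0, ?_, t3, t4⟩
      rw [t3, t4] at a; linear_combination a
  · rintro (h | h | h | h | h) <;>
      (simp only [Prod.mk.injEq] at h; obtain ⟨r1, r2, r3, r4⟩ := h;
       subst r1; subst r2; subst r3; subst r4; norm_num)
end

section
/- In the universal enveloping algebra U(g) of the simple complex Lie algebra g of type D_ℓ (realized as so(2ℓ)), the element u = Σ_{i=2}^{ℓ} e_{ε_1−ε_i} e_{ε_1+ε_i} satisfies [e_α, u] = 0 for every simple root vector e_α (α ∈ {ε_1−ε_2, ..., ε_{ℓ-1}−ε_ℓ, ε_{ℓ-1}+ε_ℓ}), and [h, u] = 2ε_1(h)·u for all h in the Cartan subalgebra; i.e., u is a highest weight vector of weight 2ε_1 = 2ω_1 for the adjoint action of g on U(g). -/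
open Matrix Finset

attribute [local instance] LieRing.ofAssociativeRing

/- We realize `g = so(2ℓ, ℂ)` of type `D_ℓ` inside the matrices indexed by `Fin ℓ ⊕ Fin ℓ`
(first block: basis vectors of weight `ε_i`, second block: weight `−ε_i`), with the Bourbaki
root vectors
`e_{ε_i−ε_j} = E_{i,j} − E_{j',i'}`, `e_{ε_i+ε_j} = E_{i,j'} − E_{j,i'}` (primes denote the
second block), and Cartan subalgebra the diagonal matrices `H(a) = diag(a, −a)`.
`U` is the universal enveloping algebra of the matrix Lie algebra (with commutator bracket);
the adjoint action of `X ∈ g` on `U(g)` is `X·f = Xf − fX`. -/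

/-- elementary matrix -/
noncomputable def Est (ℓ : ℕ) (a b : Fin ℓ ⊕ Fin ℓ) :
    Matrix (Fin ℓ ⊕ Fin ℓ) (Fin ℓ ⊕ Fin ℓ) ℂ :=
  Matrix.single a b 1

/-- root vector `e_{ε_i − ε_j}` (0-based indices) -/
noncomputable def eM (ℓ : ℕ) (i j : Fin ℓ) : Matrix (Fin ℓ ⊕ Fin ℓ) (Fin ℓ ⊕ Fin ℓ) ℂ :=
  Est ℓ (Sum.inl i) (Sum.inl j) - Est ℓ (Sum.inr j) (Sum.inr i)

/-- root vector `e_{ε_i + ε_j}` (0-based indices) -/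
noncomputable def eP (ℓ : ℕ) (i j : Fin ℓ) : Matrix (Fin ℓ ⊕ Fin ℓ) (Fin ℓ ⊕ Fin ℓ) ℂ :=
  Est ℓ (Sum.inl i) (Sum.inr j) - Est ℓ (Sum.inl j) (Sum.inr i)

/-- Cartan element `H(a) = diag(a_1, ..., a_ℓ, −a_1, ..., −a_ℓ)`; `ε_i(H(a)) = a_i`. -/
noncomputable def cart (ℓ : ℕ) (a : Fin ℓ → ℂ) :
    Matrix (Fin ℓ ⊕ Fin ℓ) (Fin ℓ ⊕ Fin ℓ) ℂ :=
  Matrix.diagonal (Sum.elim a (fun i => -a i))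

/-- the canonical embedding `g → U(g)` -/
noncomputable def ιU (ℓ : ℕ) :
    Matrix (Fin ℓ ⊕ Fin ℓ) (Fin ℓ ⊕ Fin ℓ) ℂ →ₗ⁅ℂ⁆
      UniversalEnvelopingAlgebra ℂ (Matrix (Fin ℓ ⊕ Fin ℓ) (Fin ℓ ⊕ Fin ℓ) ℂ) :=
  UniversalEnvelopingAlgebra.ι ℂ

/-- the element `u = Σ_{i=2}^{ℓ} e_{ε_1−ε_i} e_{ε_1+ε_i} ∈ U(g)` (0-based: `i ≠ 0`) -/
noncomputable def uElt (ℓ : ℕ) (hℓ : 3 ≤ ℓ) :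
    UniversalEnvelopingAlgebra ℂ (Matrix (Fin ℓ ⊕ Fin ℓ) (Fin ℓ ⊕ Fin ℓ) ℂ) :=
  ∑ i ∈ univ.filter (fun i : Fin ℓ => (i : ℕ) ≠ 0),
    ιU ℓ (eM ℓ ⟨0, by omega⟩ i) * ιU ℓ (eP ℓ ⟨0, by omega⟩ i)

/-!
The adjoint action of `X ∈ g` on `U(g)` is a derivation extending `ad X`, so
`[X, u] = Σᵢ ([X, e_{ε₁−εᵢ}] e_{ε₁+εᵢ} + e_{ε₁−εᵢ} [X, e_{ε₁+εᵢ}])`, and since `e_{ε₁+ε₁} = 0` the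
sum may run over all `i`. For `X = e_{εₚ−ε_q}` with `q ≠ 1` only the terms `i = p` and `i = q`
survive, and they cancel; for `X = e_{εₚ+ε_q}` the surviving terms reassemble to
`[e_{ε₁+εₚ}, e_{ε₁+ε_q}] = 0`; and for `X` in the Cartan subalgebra every summand has weight
`(ε₁ − εᵢ) + (ε₁ + εᵢ) = 2ε₁`.
-/

lemma ring_lie_mul {A : Type*} [Ring A] (x a b : A) : ⁅x, a * b⁆ = ⁅x, a⁆ * b + a * ⁅x, b⁆ := by
  simp only [Ring.lie_def]
  noncomm_ring

/-- `u` with `ε₁` replaced by `εₖ`. -/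
noncomputable def uEltAt (ℓ : ℕ) (k : Fin ℓ) :
    UniversalEnvelopingAlgebra ℂ (Matrix (Fin ℓ ⊕ Fin ℓ) (Fin ℓ ⊕ Fin ℓ) ℂ) :=
  ∑ i, ιU ℓ (eM ℓ k i) * ιU ℓ (eP ℓ k i)

section

variable {ℓ : ℕ}

lemma Est_mul_Est (a b c d : Fin ℓ ⊕ Fin ℓ) :
    Est ℓ a b * Est ℓ c d = if b = c then Est ℓ a d else 0 := by
  unfold Est
  split_ifs with h
  · rw [h, single_mul_single_same, one_mul]
  · exact single_mul_single_of_ne 1 a b c h 1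

lemma eP_self (p : Fin ℓ) : eP ℓ p p = 0 :=
  sub_self _

lemma eP_swap (p q : Fin ℓ) : eP ℓ q p = -eP ℓ p q :=
  (neg_sub _ _).symm

lemma lie_eM_eM (p q r s : Fin ℓ) :
    ⁅eM ℓ p q, eM ℓ r s⁆ = (if q = r then eM ℓ p s else 0) - (if s = p then eM ℓ r q else 0) := by
  simp only [Ring.lie_def, eM, sub_mul, mul_sub, Est_mul_Est]
  split_ifs <;> simp_all [eq_comm]
  abel

lemma lie_eM_eP (p q r s : Fin ℓ) :
    ⁅eM ℓ p q, eP ℓ r s⁆ = (if q = r then eP ℓ p s else 0) - (if q = s then eP ℓ p r else 0) := by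
  simp only [Ring.lie_def, eM, eP, sub_mul, mul_sub, Est_mul_Est]
  split_ifs <;> simp_all [eq_comm]
  abel

lemma lie_eP_eP (p q r s : Fin ℓ) : ⁅eP ℓ p q, eP ℓ r s⁆ = 0 := by
  simp [Ring.lie_def, eP, sub_mul, mul_sub, Est_mul_Est]

lemma lie_eP_eM (p q r s : Fin ℓ) :
    ⁅eP ℓ p q, eM ℓ r s⁆ = (if s = q then eP ℓ r p else 0) - (if s = p then eP ℓ r q else 0) := by
  rw [← lie_skew, lie_eM_eP]
  split_ifs <;> abel

lemma cart_mul_Est (a : Fin ℓ → ℂ) (x y : Fin ℓ ⊕ Fin ℓ) :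
    cart ℓ a * Est ℓ x y = Sum.elim a (fun i => -a i) x • Est ℓ x y := by
  ext s t
  by_cases h : x = s
  · subst h; simp [cart, Est, single]
  · simp [cart, Est, single_apply_of_row_ne h]

lemma Est_mul_cart (a : Fin ℓ → ℂ) (x y : Fin ℓ ⊕ Fin ℓ) :
    Est ℓ x y * cart ℓ a = Sum.elim a (fun i => -a i) y • Est ℓ x y := by
  ext s t
  by_cases h : y = t
  · subst h; simp [cart, Est, single, mul_comm]
  · simp [cart, Est, single_apply_of_col_ne _ _ h]

lemma lie_cart_eM (a : Fin ℓ → ℂ) (p q : Fin ℓ) :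
    ⁅cart ℓ a, eM ℓ p q⁆ = (a p - a q) • eM ℓ p q := by
  simp only [Ring.lie_def, eM, mul_sub, sub_mul, cart_mul_Est, Est_mul_cart, Sum.elim_inl,
    Sum.elim_inr]
  module

lemma lie_cart_eP (a : Fin ℓ → ℂ) (p q : Fin ℓ) :
    ⁅cart ℓ a, eP ℓ p q⁆ = (a p + a q) • eP ℓ p q := by
  simp only [Ring.lie_def, eP, mul_sub, sub_mul, cart_mul_Est, Est_mul_cart, Sum.elim_inl,
    Sum.elim_inr]
  module

lemma uElt_eq_uEltAt (hℓ : 3 ≤ ℓ) : uElt ℓ hℓ = uEltAt ℓ ⟨0, by omega⟩ := by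
  refine sum_filter_of_ne fun i _ hi => ?_
  contrapose! hi
  rw [show i = ⟨0, by omega⟩ from Fin.ext hi, eP_self, map_zero, mul_zero]

lemma lie_ιU_uEltAt (X : Matrix (Fin ℓ ⊕ Fin ℓ) (Fin ℓ ⊕ Fin ℓ) ℂ) (k : Fin ℓ) :
    ⁅ιU ℓ X, uEltAt ℓ k⁆
      = ∑ i, (ιU ℓ ⁅X, eM ℓ k i⁆ * ιU ℓ (eP ℓ k i) + ιU ℓ (eM ℓ k i) * ιU ℓ ⁅X, eP ℓ k i⁆) := by
  simp only [uEltAt, lie_sum, ring_lie_mul, LieHom.map_lie]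

lemma lie_eM_uEltAt {p q k : Fin ℓ} (hq : q ≠ k) : ⁅ιU ℓ (eM ℓ p q), uEltAt ℓ k⁆ = 0 := by
  set C := ιU ℓ (eM ℓ k q) * ιU ℓ (eP ℓ k p)
  have hterm : ∀ i, ιU ℓ ⁅eM ℓ p q, eM ℓ k i⁆ * ιU ℓ (eP ℓ k i)
      + ιU ℓ (eM ℓ k i) * ιU ℓ ⁅eM ℓ p q, eP ℓ k i⁆
      = (if i = q then C else 0) - (if i = p then C else 0) := by
    intro i
    rw [lie_eM_eM, lie_eM_eP, if_neg hq, if_neg hq]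
    by_cases hip : i = p <;> by_cases hiq : i = q <;> subst_vars <;>
      simp_all [C, eP_swap k, eq_comm]
  rw [lie_ιU_uEltAt, sum_congr rfl fun i _ => hterm i, sum_sub_distrib, sum_ite_eq',
    sum_ite_eq', if_pos (mem_univ _), if_pos (mem_univ _), sub_self]

lemma lie_eP_uEltAt (p q k : Fin ℓ) : ⁅ιU ℓ (eP ℓ p q), uEltAt ℓ k⁆ = 0 := by
  have hterm : ∀ i, ιU ℓ ⁅eP ℓ p q, eM ℓ k i⁆ * ιU ℓ (eP ℓ k i)
      + ιU ℓ (eM ℓ k i) * ιU ℓ ⁅eP ℓ p q, eP ℓ k i⁆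
      = (if i = q then ιU ℓ (eP ℓ k p) * ιU ℓ (eP ℓ k q) else 0)
        - (if i = p then ιU ℓ (eP ℓ k q) * ιU ℓ (eP ℓ k p) else 0) := by
    intro i
    rw [lie_eP_eM, lie_eP_eP]
    split_ifs <;> subst_vars <;> simp
  rw [lie_ιU_uEltAt, sum_congr rfl fun i _ => hterm i, sum_sub_distrib, sum_ite_eq',
    sum_ite_eq', if_pos (mem_univ _), if_pos (mem_univ _), ← Ring.lie_def, ← LieHom.map_lie,
    lie_eP_eP, map_zero]

lemma lie_cart_uEltAt (a : Fin ℓ → ℂ) (k : Fin ℓ) :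
    ⁅ιU ℓ (cart ℓ a), uEltAt ℓ k⁆ = (2 * a k) • uEltAt ℓ k := by
  rw [lie_ιU_uEltAt, uEltAt, smul_sum]
  refine sum_congr rfl fun i _ => ?_
  rw [lie_cart_eM, lie_cart_eP, map_smul, map_smul, smul_mul_assoc, mul_smul_comm, ← add_smul]
  ring_nf

end

/-- In `U(g)` for `g` of type `D_ℓ`, the element
`u = Σ_{i=2}^{ℓ} e_{ε_1−ε_i} e_{ε_1+ε_i}` satisfies `[e_α, u] = 0` for every simple root vector
`e_α` (`α ∈ {ε_1−ε_2, ..., ε_{ℓ-1}−ε_ℓ, ε_{ℓ-1}+ε_ℓ}`) and `[H, u] = 2ε_1(H)·u` for every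
Cartan element `H`; i.e. `u` is a highest weight vector of weight `2ε_1 = 2ω_1` for the adjoint
action of `g` on `U(g)`. -/
theorem stmt5_u_is_highest_weight_vector_of_weight_two_omega1
    (ℓ : ℕ) (hℓ : 3 ≤ ℓ) :
    (∀ (j : ℕ) (hj : j + 1 < ℓ),
      ιU ℓ (eM ℓ ⟨j, by omega⟩ ⟨j + 1, hj⟩) * uElt ℓ hℓ
        - uElt ℓ hℓ * ιU ℓ (eM ℓ ⟨j, by omega⟩ ⟨j + 1, hj⟩) = 0) ∧
    (ιU ℓ (eP ℓ ⟨ℓ - 2, by omega⟩ ⟨ℓ - 1, by omega⟩) * uElt ℓ hℓ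
        - uElt ℓ hℓ * ιU ℓ (eP ℓ ⟨ℓ - 2, by omega⟩ ⟨ℓ - 1, by omega⟩) = 0) ∧
    (∀ a : Fin ℓ → ℂ,
      ιU ℓ (cart ℓ a) * uElt ℓ hℓ - uElt ℓ hℓ * ιU ℓ (cart ℓ a)
        = (2 * a ⟨0, by omega⟩) • uElt ℓ hℓ) := by
  rw [uElt_eq_uEltAt]
  refine ⟨fun j hj => lie_eM_uEltAt ?_, lie_eP_uEltAt _ _ _, fun a => lie_cart_uEltAt a _⟩
  simp [Fin.ext_iff]
end
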